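/- arXiv:2602.17486 — 7 statements merged into one kernel-verified Lean document; each statement's English description precedes it below -/
import Mathlib

section
/- For every n ∈ ℝ, η ≥ 0, and z ∈ ℝ^{2d}, the EPP update z† of z satisfies ‖z†‖² = zᵀ (I + (n−1)²η²Ā²)(I + n²η²Ā²)⁻¹ z, where I + n²η²Ā² is positive definite (hence invertible) and commutes with I + (n−1)²η²Ā². -/
open Matrix Finset

noncomputable section

/-- The strategy space ℝ^{2d}, with its Euclidean norm. -/
abbrev Vec (d : ℕ) := EuclideanSpace ℝ (Fin d ⊕ Fin d)

/-- The action of a (2d)×(2d) matrix on ℝ^{2d}. -/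
def mulVecE {d : ℕ} (M : Matrix (Fin d ⊕ Fin d) (Fin d ⊕ Fin d) ℝ) (z : Vec d) : Vec d :=
  WithLp.toLp 2 (M.mulVec z)

/-- A = [[0, B], [-Bᵀ, 0]] -/
def mkA {d : ℕ} (B : Matrix (Fin d) (Fin d) ℝ) :
    Matrix (Fin d ⊕ Fin d) (Fin d ⊕ Fin d) ℝ :=
  Matrix.fromBlocks 0 B (-Bᵀ) 0

/-- Ā = [[0, B], [Bᵀ, 0]] -/
def mkAbar {d : ℕ} (B : Matrix (Fin d) (Fin d) ℝ) :
    Matrix (Fin d ⊕ Fin d) (Fin d ⊕ Fin d) ℝ :=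
  Matrix.fromBlocks 0 B Bᵀ 0

/-- z follows WOGDA with delay m, prediction length n and step size η:
z_{t+1} - z_t = ηA z_{t-m} + (n+m)ηA(z_{t-m} - z_{t-m-1}) for all t ≥ m+1. -/
def FollowsWOGDA {d : ℕ} (A : Matrix (Fin d ⊕ Fin d) (Fin d ⊕ Fin d) ℝ)
    (m n : ℕ) (η : ℝ) (z : ℕ → Vec d) : Prop :=
  ∀ t : ℕ, m + 1 ≤ t →
    z (t + 1) - z t =
      η • mulVecE A (z (t - m)) +
      (((n : ℝ) + (m : ℝ)) * η) • mulVecE A (z (t - m) - z (t - m - 1))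

/-- z† is the EPP update of z with prediction length n and step size η. -/
def IsEPP {d : ℕ} (A : Matrix (Fin d ⊕ Fin d) (Fin d ⊕ Fin d) ℝ)
    (n η : ℝ) (z zdag : Vec d) : Prop :=
  zdag = z + η • mulVecE A z + (n * η) • mulVecE A (zdag - z)

/-- 𝒵_t = n Σ_{s=1}^{m+1} z_{t-s} + Σ_{s=2}^{m+1} Σ_{r=s}^{m+1} z_{t-r}. -/
def Zcal {d : ℕ} (m : ℕ) (n : ℝ) (z : ℕ → Vec d) (t : ℕ) : Vec d :=
  n • ∑ s ∈ Finset.Icc 1 (m + 1), z (t - s) +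
  ∑ s ∈ Finset.Icc 2 (m + 1), ∑ r ∈ Finset.Icc s (m + 1), z (t - r)

/-- Δ²𝒵_t = 𝒵_{t+2} - 2𝒵_{t+1} + 𝒵_t. -/
def Delta2Zcal {d : ℕ} (m : ℕ) (n : ℝ) (z : ℕ → Vec d) (t : ℕ) : Vec d :=
  Zcal m n z (t + 2) - (2 : ℝ) • Zcal m n z (t + 1) + Zcal m n z t

/-- LCR_EPP(n) = 1 - ((2n-1)/2) η² λ_min² + (n²(2n-1)/2) η⁴ λ_min⁴. -/
def LCR_EPP (η lmin : ℝ) (n : ℝ) : ℝ :=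
  1 - (2 * n - 1) / 2 * η ^ 2 * lmin ^ 2 + n ^ 2 * (2 * n - 1) / 2 * η ^ 4 * lmin ^ 4

/-- ER(j,n), the error rate between WOGDA and EPP. -/
def ER (η lmax : ℝ) (m j n : ℕ) : ℝ :=
  2 * (2 * (n : ℝ) + m) * ((m : ℝ) + 1) * η ^ 3 * lmax ^ 3 +
  8 * ((n : ℝ) + m) ^ (j + 1) * η ^ (j + 2) * lmax ^ (j + 2) +
  2 * (2 * (n : ℝ) + m + 1) * ((n : ℝ) + m) ^ (2 * j) * η ^ (2 * j + 1) * lmax ^ (2 * j + 1)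


section Aux

variable {d : ℕ} (B : Matrix (Fin d) (Fin d) ℝ)

lemma mkA_transpose : (mkA B)ᵀ = -(mkA B) := by
  simp [mkA, Matrix.fromBlocks_transpose, Matrix.fromBlocks_neg]

lemma mkA_mul_self : mkA B * mkA B = -(mkAbar B * mkAbar B) := by
  simp [mkA, mkAbar, Matrix.fromBlocks_multiply, Matrix.fromBlocks_neg]

lemma mkA_transpose_mul_self : (mkA B)ᵀ * mkA B = mkAbar B * mkAbar B := by
  rw [mkA_transpose, Matrix.neg_mul, mkA_mul_self, neg_neg]

end Aux

/-- Lemma 1: dynamics of the Extra Proximal Point method. -/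
theorem epp_dynamics
    (d : ℕ) (hd : 0 < d) (B : Matrix (Fin d) (Fin d) ℝ) (hB : IsUnit B.det)
    (n η : ℝ) (hη : 0 ≤ η)
    (z zdag : Vec d) (hzdag : IsEPP (mkA B) n η z zdag) :
    ((1 : Matrix (Fin d ⊕ Fin d) (Fin d ⊕ Fin d) ℝ) +
        (n ^ 2 * η ^ 2) • (mkAbar B * mkAbar B)).PosDef ∧
    ((1 : Matrix (Fin d ⊕ Fin d) (Fin d ⊕ Fin d) ℝ) +
          (n ^ 2 * η ^ 2) • (mkAbar B * mkAbar B)) *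
        (1 + ((n - 1) ^ 2 * η ^ 2) • (mkAbar B * mkAbar B)) =
      (1 + ((n - 1) ^ 2 * η ^ 2) • (mkAbar B * mkAbar B)) *
        (1 + (n ^ 2 * η ^ 2) • (mkAbar B * mkAbar B)) ∧
    ‖zdag‖ ^ 2 = z ⬝ᵥ
      (((1 + ((n - 1) ^ 2 * η ^ 2) • (mkAbar B * mkAbar B)) *
        ((1 : Matrix (Fin d ⊕ Fin d) (Fin d ⊕ Fin d) ℝ) +
          (n ^ 2 * η ^ 2) • (mkAbar B * mkAbar B))⁻¹).mulVec z) := by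
  set A := mkA B with hA
  set S := mkAbar B * mkAbar B with hS
  have hAT : Aᵀ = -A := mkA_transpose B
  have hAA : A * A = -S := mkA_mul_self B
  have hSA : S * A = A * S := by
    have hS' : S = -(A * A) := by rw [hAA, neg_neg]
    rw [hS', Matrix.neg_mul, Matrix.mul_neg, mul_assoc]
  -- positive definiteness
  have hsemi : ((n ^ 2 * η ^ 2) • S).PosSemidef := by
    have heq : (n ^ 2 * η ^ 2) • S = ((n * η) • A)ᴴ * ((n * η) • A) := by
      rw [Matrix.conjTranspose_smul, Matrix.conjTranspose_eq_transpose_of_trivial, hAT]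
      simp only [star_trivial, smul_mul_assoc, mul_smul_comm, smul_smul, Matrix.neg_mul, hAA,
        smul_neg, neg_neg]
      rw [show n * η * (n * η) = n ^ 2 * η ^ 2 by ring]
    rw [heq]
    exact Matrix.posSemidef_conjTranspose_mul_self _
  have hM : ((1 : Matrix (Fin d ⊕ Fin d) (Fin d ⊕ Fin d) ℝ) + (n ^ 2 * η ^ 2) • S).PosDef :=
    Matrix.PosDef.one.add_posSemidef hsemi
  set M : Matrix (Fin d ⊕ Fin d) (Fin d ⊕ Fin d) ℝ := 1 + (n ^ 2 * η ^ 2) • S with hMdef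
  set T : Matrix (Fin d ⊕ Fin d) (Fin d ⊕ Fin d) ℝ := 1 + ((n - 1) ^ 2 * η ^ 2) • S with hTdef
  refine ⟨hM, ?_, ?_⟩
  · -- commutation
    rw [hMdef, hTdef]
    simp only [add_mul, mul_add, one_mul, mul_one, smul_mul_assoc, mul_smul_comm, smul_smul]
    module
  · -- the norm identity
    have hMu : IsUnit M.det := hM.det_pos.ne'.isUnit
    set P : Matrix (Fin d ⊕ Fin d) (Fin d ⊕ Fin d) ℝ := 1 + ((1 - n) * η) • A with hP
    set Q : Matrix (Fin d ⊕ Fin d) (Fin d ⊕ Fin d) ℝ := 1 - (n * η) • A with hQ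
    have hQT : Qᵀ = 1 + (n * η) • A := by
      rw [hQ, Matrix.transpose_sub, Matrix.transpose_one, Matrix.transpose_smul, hAT, smul_neg,
        sub_neg_eq_add]
    have hQQT : Q * Qᵀ = M := by
      rw [hQT, hQ, hMdef]
      simp only [sub_mul, mul_add, one_mul, mul_one, smul_mul_assoc, mul_smul_comm, smul_smul,
        hAA, smul_neg]
      module
    have hQu : IsUnit Q.det := by
      have h1 : Q.det * Q.det = M.det := by
        rw [← hQQT, Matrix.det_mul, Matrix.det_transpose]
      have h2 : Q.det ≠ 0 := by
        intro h
        exact hM.det_pos.ne' (by rw [← h1, h, mul_zero])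
      exact h2.isUnit
    -- the EPP relation, in plain function form
    obtain ⟨zf, hzf⟩ : ∃ w : Fin d ⊕ Fin d → ℝ, w = z := ⟨z, rfl⟩
    obtain ⟨zdagf, hzdagf⟩ : ∃ w : Fin d ⊕ Fin d → ℝ, w = zdag := ⟨zdag, rfl⟩
    have h0 : zdagf = zf + η • A.mulVec zf + (n * η) • (A.mulVec zdagf - A.mulVec zf) := by
      have h : zdagf = zf + η • A.mulVec zf + (n * η) • A.mulVec (zdagf - zf) := by
        rw [hzf, hzdagf]; have h' := congrArg WithLp.ofLp hzdag; simpa [mulVecE] using h'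
      rwa [Matrix.mulVec_sub] at h
    have hQz : Q.mulVec zdagf = P.mulVec zf := by
      rw [hQ, hP, Matrix.sub_mulVec, Matrix.add_mulVec, Matrix.one_mulVec, Matrix.one_mulVec,
        Matrix.smul_mulVec, Matrix.smul_mulVec]
      set az := A.mulVec zf with haz
      set azd := A.mulVec zdagf with hazd
      rw [h0]
      module
    have hzd : zdagf = (Q⁻¹ * P).mulVec zf := by
      have h2 := congrArg (fun v => Q⁻¹.mulVec v) hQz
      simpa [Matrix.mulVec_mulVec, Matrix.nonsing_inv_mul Q hQu] using h2
    have hnorm : ‖zdag‖ ^ 2 = zdagf ⬝ᵥ zdagf := by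
      rw [hzdagf, EuclideanSpace.norm_eq, Real.sq_sqrt (by positivity)]
      simp [dotProduct, Real.norm_eq_abs, sq_abs, pow_two]
    -- commutation of M with P
    have hcomm : M * P = P * M := by
      rw [hMdef, hP]
      simp only [add_mul, mul_add, one_mul, mul_one, smul_mul_assoc, mul_smul_comm, smul_smul,
        hSA]
      module
    have hMM : M * M⁻¹ = 1 := Matrix.mul_nonsing_inv M hMu
    have hM'M : M⁻¹ * M = 1 := Matrix.nonsing_inv_mul M hMu
    have hMinvP : M⁻¹ * P = P * M⁻¹ := by
      calc M⁻¹ * P = M⁻¹ * P * (M * M⁻¹) := by rw [hMM, mul_one]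
        _ = M⁻¹ * (P * M) * M⁻¹ := by simp only [mul_assoc]
        _ = M⁻¹ * (M * P) * M⁻¹ := by rw [hcomm]
        _ = (M⁻¹ * M) * P * M⁻¹ := by simp only [mul_assoc]
        _ = P * M⁻¹ := by rw [hM'M, one_mul]
    have hPT : Pᵀ = 1 - ((1 - n) * η) • A := by
      rw [hP, Matrix.transpose_add, Matrix.transpose_one, Matrix.transpose_smul, hAT, smul_neg,
        ← sub_eq_add_neg]
    have hPTP : Pᵀ * P = T := by
      rw [hPT, hP, hTdef]
      simp only [sub_mul, mul_add, one_mul, mul_one, smul_mul_assoc, mul_smul_comm, smul_smul,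
        hAA, smul_neg]
      module
    have hmat : (Q⁻¹ * P)ᵀ * (Q⁻¹ * P) = T * M⁻¹ := by
      rw [Matrix.transpose_mul, Matrix.transpose_nonsing_inv]
      have hQQinv : Qᵀ⁻¹ * Q⁻¹ = M⁻¹ := by rw [← Matrix.mul_inv_rev, hQQT]
      calc Pᵀ * Qᵀ⁻¹ * (Q⁻¹ * P) = Pᵀ * ((Qᵀ⁻¹ * Q⁻¹) * P) := by simp only [mul_assoc]
        _ = Pᵀ * (M⁻¹ * P) := by rw [hQQinv]
        _ = Pᵀ * (P * M⁻¹) := by rw [hMinvP]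
        _ = (Pᵀ * P) * M⁻¹ := by simp only [mul_assoc]
        _ = T * M⁻¹ := by rw [hPTP]
    have key : ∀ (N : Matrix (Fin d ⊕ Fin d) (Fin d ⊕ Fin d) ℝ) (v : Fin d ⊕ Fin d → ℝ),
        v ⬝ᵥ ((Nᵀ * N).mulVec v) = (N.mulVec v) ⬝ᵥ (N.mulVec v) := by
      intro N v
      rw [← Matrix.mulVec_mulVec, Matrix.dotProduct_mulVec, Matrix.vecMul_transpose]
    rw [hnorm, hzd, ← hzf, ← hmat, key]
end
end

section
/- Let n ∈ ℝ with n ≥ 1/2 and let η be a real number with 0 ≤ η ≤ 1/(n·λ_min). Then for every z ∈ ℝ^{2d}, the EPP update z† of z satisfies ‖z†‖ ≤ LCR_EPP(n)·‖z‖, where LCR_EPP(n) := 1 − ((2n−1)/2)·η²λ_min² + (n²(2n−1)/2)·η⁴λ_min⁴. -/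
open Matrix Finset

noncomputable section

open scoped RealInnerProductSpace

lemma mkA_skew {d : ℕ} (B : Matrix (Fin d) (Fin d) ℝ) (v w : Vec d) :
    ⟪mulVecE (mkA B) v, w⟫ = -⟪v, mulVecE (mkA B) w⟫ := by
  have ht : (mkA B)ᵀ = -(mkA B) := by
    simp [mkA, Matrix.fromBlocks_transpose, Matrix.fromBlocks_neg]
  simp only [mulVecE, PiLp.inner_apply, RCLike.inner_apply, conj_trivial]
  have h1 : ∑ i, w.ofLp i * (mkA B).mulVec v.ofLp i = ((mkA B).mulVec v.ofLp) ⬝ᵥ w.ofLp := by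
    rw [dotProduct_comm]; rfl
  have h2 : ∑ i, (mkA B).mulVec w.ofLp i * v.ofLp i = v.ofLp ⬝ᵥ ((mkA B).mulVec w.ofLp) := by
    rw [dotProduct_comm]; rfl
  rw [h1, h2, Matrix.dotProduct_mulVec, ← Matrix.mulVec_transpose, ht]
  simp [Matrix.neg_mulVec, dotProduct_comm]

lemma mkA_self {d : ℕ} (B : Matrix (Fin d) (Fin d) ℝ) (v : Vec d) :
    ⟪v, mulVecE (mkA B) v⟫ = 0 := by
  have h := mkA_skew B v v
  rw [real_inner_comm] at h
  linarith

lemma epp_aux_nonneg (n t : ℝ) (hn : 1 / 2 ≤ n) (ht0 : 0 ≤ t) (hnt : n * t ≤ 1) :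
    0 ≤ 1 - (2 * n - 1) * (t ^ 2 * (1 - n ^ 2 * t ^ 2)) / 2 := by
  have hq0 : 0 ≤ t ^ 2 * (1 - n ^ 2 * t ^ 2) := by
    have h1 : n ^ 2 * t ^ 2 ≤ 1 := by nlinarith [mul_nonneg (by linarith : (0:ℝ) ≤ n) ht0]
    nlinarith [sq_nonneg t]
  have h1 : n ^ 2 * (t ^ 2 * (1 - n ^ 2 * t ^ 2)) ≤ 1 / 4 := by
    nlinarith [sq_nonneg (n ^ 2 * t ^ 2 - 1 / 2)]
  nlinarith [hq0, h1, mul_nonneg (by linarith : (0:ℝ) ≤ 2 * n - 1) hq0]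

lemma epp_aux_step (D Z L x : ℝ) (hD : 0 ≤ D) (hZ : 0 ≤ Z) (hL0 : 0 ≤ L)
    (hLx : L = 1 - x / 2) (hD2 : D ^ 2 ≤ (1 - x) * Z ^ 2) : D ≤ L * Z := by
  have h2 : D ^ 2 ≤ (L * Z) ^ 2 := by rw [hLx]; nlinarith [sq_nonneg (x * Z)]
  have h := Real.sqrt_le_sqrt h2
  rwa [Real.sqrt_sq hD, Real.sqrt_sq (mul_nonneg hL0 hZ)] at h

set_option maxHeartbeats 1000000 in

/-- Lemma 2: linear contraction of the Extra Proximal Point method. -/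
theorem epp_contraction
    (d : ℕ) (hd : 0 < d) (B : Matrix (Fin d) (Fin d) ℝ) (hB : IsUnit B.det)
    (lmin lmax : ℝ) (hlmin : 0 < lmin) (hminmax : lmin ≤ lmax)
    (hbound : ∀ w : Vec d,
      lmin * ‖w‖ ≤ ‖mulVecE (mkA B) w‖ ∧ ‖mulVecE (mkA B) w‖ ≤ lmax * ‖w‖)
    (n : ℝ) (hn : 1 / 2 ≤ n)
    (η : ℝ) (hη0 : 0 ≤ η) (hη1 : η ≤ 1 / (n * lmin))
    (z zdag : Vec d) (hzdag : IsEPP (mkA B) n η z zdag) :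
    ‖zdag‖ ≤ LCR_EPP η lmin n * ‖z‖ := by
  have hn0 : 0 < n := by linarith
  have hnl : 0 < n * lmin := by positivity
  have hs1 : n * η * lmin ≤ 1 := by
    have := (le_div_iff₀ hnl).mp hη1
    nlinarith
  rw [IsEPP] at hzdag
  have hueq : zdag - z = η • mulVecE (mkA B) z + (n * η) • mulVecE (mkA B) (zdag - z) := by
    nth_rewrite 1 [hzdag]
    abel
  -- basic inner product facts
  have h1 : ⟪zdag - z, mulVecE (mkA B) (zdag - z)⟫ = 0 := mkA_self B _
  have h2 : ⟪z, mulVecE (mkA B) z⟫ = 0 := mkA_self B z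
  have h2' : ⟪mulVecE (mkA B) z, z⟫ = 0 := by rw [real_inner_comm]; exact h2
  have hskew : ⟪mulVecE (mkA B) (zdag - z), z⟫ = -⟪zdag - z, mulVecE (mkA B) z⟫ :=
    mkA_skew B _ _
  -- F1 : η * ⟪u, Az⟫ = ‖u‖²
  have e1 : ⟪zdag - z, zdag - z⟫ = η * ⟪zdag - z, mulVecE (mkA B) z⟫ +
      (n * η) * ⟪zdag - z, mulVecE (mkA B) (zdag - z)⟫ := by
    nth_rewrite 2 [hueq]
    rw [inner_add_right, real_inner_smul_right, real_inner_smul_right]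
  have hF1 : η * ⟪zdag - z, mulVecE (mkA B) z⟫ = ‖zdag - z‖ ^ 2 := by
    rw [← real_inner_self_eq_norm_sq]
    rw [e1, h1]; ring
  -- F2 : ⟪u, z⟫ = -n‖u‖²
  have e2 : ⟪zdag - z, z⟫ = η * ⟪mulVecE (mkA B) z, z⟫ +
      (n * η) * ⟪mulVecE (mkA B) (zdag - z), z⟫ := by
    nth_rewrite 1 [hueq]
    rw [inner_add_left, real_inner_smul_left, real_inner_smul_left]
  have hF2 : ⟪zdag - z, z⟫ = -n * ‖zdag - z‖ ^ 2 := by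
    rw [e2, h2', hskew]
    nlinarith [hF1]
  -- F3 : ‖zdag‖² = ‖z‖² - (2n-1)‖u‖²
  have hF3 : ‖zdag‖ ^ 2 = ‖z‖ ^ 2 - (2 * n - 1) * ‖zdag - z‖ ^ 2 := by
    have hz' : zdag = z + (zdag - z) := by abel
    calc ‖zdag‖ ^ 2 = ‖z + (zdag - z)‖ ^ 2 := by rw [← hz']
      _ = ‖z‖ ^ 2 + 2 * ⟪z, zdag - z⟫ + ‖zdag - z‖ ^ 2 := norm_add_sq_real z _
      _ = ‖z‖ ^ 2 - (2 * n - 1) * ‖zdag - z‖ ^ 2 := by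
          rw [real_inner_comm, hF2]; ring
  -- the auxiliary vector v with A v = u
  set v : Vec d := η • z + (n * η) • (zdag - z) with hvdef
  have hmadd : ∀ (x y : Vec d), mulVecE (mkA B) (x + y) = mulVecE (mkA B) x + mulVecE (mkA B) y :=
    fun x y => by simp [mulVecE, Matrix.mulVec_add]
  have hmsmul : ∀ (c : ℝ) (x : Vec d), mulVecE (mkA B) (c • x) = c • mulVecE (mkA B) x :=
    fun c x => by simp [mulVecE, Matrix.mulVec_smul]
  have hAv : mulVecE (mkA B) v = zdag - z := by
    rw [hvdef, hmadd, hmsmul, hmsmul, ← hueq]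
  have hvu : ⟪v, zdag - z⟫ = 0 := by
    rw [← hAv]; exact mkA_self B v
  have hvbound : lmin * ‖v‖ ≤ ‖zdag - z‖ := by
    have := (hbound v).1
    rwa [hAv] at this
  -- F4 : η²‖z‖² = ‖v‖² + n²η²‖u‖²
  have hF4 : η ^ 2 * ‖z‖ ^ 2 = ‖v‖ ^ 2 + (n * η) ^ 2 * ‖zdag - z‖ ^ 2 := by
    have hsub : η • z = v - (n * η) • (zdag - z) := by rw [hvdef]; abel
    have hnorm : ‖η • z‖ ^ 2 = η ^ 2 * ‖z‖ ^ 2 := by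
      rw [norm_smul, Real.norm_eq_abs, mul_pow, sq_abs]
    have := norm_sub_sq_real v ((n * η) • (zdag - z))
    rw [real_inner_smul_right, hvu, norm_smul, Real.norm_eq_abs] at this
    rw [← hnorm, hsub, this]
    rw [mul_pow, sq_abs]
    ring
  -- key lower bound on ‖u‖²
  have hlv : lmin ^ 2 * ‖v‖ ^ 2 ≤ ‖zdag - z‖ ^ 2 := by
    nlinarith [hvbound, norm_nonneg v, norm_nonneg (zdag - z), hlmin.le,
      mul_nonneg hlmin.le (norm_nonneg v)]
  have hs0 : 0 ≤ n ^ 2 * η ^ 2 * lmin ^ 2 := by positivity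
  have hsle : n ^ 2 * η ^ 2 * lmin ^ 2 ≤ 1 := by nlinarith [hs1, mul_nonneg (mul_nonneg hn0.le hη0) hlmin.le]
  have hkey : lmin ^ 2 * (1 - n ^ 2 * η ^ 2 * lmin ^ 2) * (η ^ 2 * ‖z‖ ^ 2) ≤
      ‖zdag - z‖ ^ 2 := by
    rw [hF4]
    nlinarith [hlv, hs0, hsle, sq_nonneg (‖zdag - z‖), sq_nonneg ‖v‖,
      mul_nonneg hs0 (sq_nonneg (‖zdag - z‖)),
      mul_le_one₀ hsle hs0 hsle]
  -- combine
  have h2n : 0 ≤ 2 * n - 1 := by linarith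
  have hD2 : ‖zdag‖ ^ 2 ≤
      (1 - (2 * n - 1) * (lmin ^ 2 * (1 - n ^ 2 * η ^ 2 * lmin ^ 2) * η ^ 2)) * ‖z‖ ^ 2 := by
    rw [hF3]
    nlinarith [mul_le_mul_of_nonneg_left hkey h2n]
  have hL0 : 0 ≤ LCR_EPP η lmin n := by
    have e : LCR_EPP η lmin n =
        1 - (2 * n - 1) * ((η * lmin) ^ 2 * (1 - n ^ 2 * (η * lmin) ^ 2)) / 2 := by
      rw [LCR_EPP]; ring
    have := epp_aux_nonneg n (η * lmin) hn (by positivity) (by nlinarith [hs1])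
    linarith
  have hLx : LCR_EPP η lmin n =
      1 - ((2 * n - 1) * (lmin ^ 2 * (1 - n ^ 2 * η ^ 2 * lmin ^ 2) * η ^ 2)) / 2 := by
    rw [LCR_EPP]; ring
  exact epp_aux_step _ _ _ _ (norm_nonneg zdag) (norm_nonneg z) hL0 hLx hD2
end
end

section
/- Let N be a positive integer, S an N×N real symmetric positive semidefinite matrix, and μ ≥ 0 a real number such that zᵀSz ≥ μ‖z‖² for all z ∈ ℝ^N. Then for every n ∈ ℝ with n ≥ 1/2, every η ≥ 0, and every z ∈ ℝ^N: zᵀ(I + (n−1)²η²S)(I + n²η²S)⁻¹ z ≤ ((1 + (n−1)²η²μ)/(1 + n²η²μ))·‖z‖², where I + n²η²S is positive definite (hence invertible) and commutes with I + (n−1)²η²S. -/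
open Matrix

noncomputable section

private lemma psd_smul' {N : ℕ} {c : ℝ} (hc : 0 ≤ c) {M : Matrix (Fin N) (Fin N) ℝ}
    (h : M.PosSemidef) : (c • M).PosSemidef := by
  refine .of_dotProduct_mulVec_nonneg ?_ (fun x => ?_)
  · show (c • M)ᴴ = c • M
    rw [conjTranspose_smul, h.1.eq]
    simp
  · have h2 := h.dotProduct_mulVec_nonneg x
    simp only [star_trivial] at h2 ⊢
    rw [smul_mulVec, dotProduct_smul, smul_eq_mul]
    exact mul_nonneg hc h2

private lemma dot_symm {N : ℕ} (M : Matrix (Fin N) (Fin N) ℝ) (hM : Mᵀ = M)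
    (u v : Fin N → ℝ) : (M *ᵥ u) ⬝ᵥ v = u ⬝ᵥ (M *ᵥ v) :=
  calc (M *ᵥ u) ⬝ᵥ v = v ⬝ᵥ (M *ᵥ u) := dotProduct_comm _ _
    _ = (v ᵥ* M) ⬝ᵥ u := dotProduct_mulVec _ _ _
    _ = (M *ᵥ v) ⬝ᵥ u := by rw [← mulVec_transpose, hM]
    _ = u ⬝ᵥ (M *ᵥ v) := dotProduct_comm _ _

private lemma norm_sq_eq_dot {N : ℕ} (x : EuclideanSpace ℝ (Fin N)) :
    ‖x‖ ^ 2 = x ⬝ᵥ x := by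
  rw [EuclideanSpace.norm_eq, Real.sq_sqrt (by positivity)]
  simp [dotProduct, Real.norm_eq_abs, sq_abs, pow_two]

/-- The tight quadratic-form bound used in the proof of Lemma 2. -/
theorem quadratic_form_ratio_bound
    (N : ℕ) (hN : 0 < N) (S : Matrix (Fin N) (Fin N) ℝ) (hS : S.PosSemidef)
    (μ : ℝ) (hμ : 0 ≤ μ)
    (hlow : ∀ z : EuclideanSpace ℝ (Fin N), μ * ‖z‖ ^ 2 ≤ z ⬝ᵥ S.mulVec z)
    (n : ℝ) (hn : 1 / 2 ≤ n) (η : ℝ) (hη : 0 ≤ η)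
    (z : EuclideanSpace ℝ (Fin N)) :
    ((1 : Matrix (Fin N) (Fin N) ℝ) + (n ^ 2 * η ^ 2) • S).PosDef ∧
    ((1 : Matrix (Fin N) (Fin N) ℝ) + (n ^ 2 * η ^ 2) • S) *
        (1 + ((n - 1) ^ 2 * η ^ 2) • S) =
      (1 + ((n - 1) ^ 2 * η ^ 2) • S) *
        ((1 : Matrix (Fin N) (Fin N) ℝ) + (n ^ 2 * η ^ 2) • S) ∧
    z ⬝ᵥ (((1 + ((n - 1) ^ 2 * η ^ 2) • S) *
        ((1 : Matrix (Fin N) (Fin N) ℝ) + (n ^ 2 * η ^ 2) • S)⁻¹).mulVec z) ≤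
      (1 + (n - 1) ^ 2 * η ^ 2 * μ) / (1 + n ^ 2 * η ^ 2 * μ) * ‖z‖ ^ 2 := by
  set a : ℝ := n ^ 2 * η ^ 2 with ha_def
  set b : ℝ := (n - 1) ^ 2 * η ^ 2 with hb_def
  have ha : 0 ≤ a := by positivity
  have hb : 0 ≤ b := by positivity
  have hba : b ≤ a := by
    rw [ha_def, hb_def]
    nlinarith [sq_nonneg η, sq_nonneg (n - 1)]
  set A := (1 : Matrix (Fin N) (Fin N) ℝ) + a • S with hA_def
  set B := (1 : Matrix (Fin N) (Fin N) ℝ) + b • S with hB_def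
  have hA : A.PosDef := Matrix.PosDef.add_posSemidef Matrix.PosDef.one (psd_smul' ha hS)
  have hSt : Sᵀ = S := (show S.IsSymm by simpa using hS.1).eq
  have hAt : Aᵀ = A := by
    rw [hA_def, transpose_add, transpose_one, transpose_smul, hSt]
  have hcomm : A * B = B * A := by
    rw [hA_def, hB_def]
    simp only [add_mul, mul_add, one_mul, mul_one, Matrix.smul_mul, Matrix.mul_smul, smul_smul]
    module
  refine ⟨hA, hcomm, ?_⟩
  -- P = S - μ•1 is PSD
  have hP : (S - μ • (1 : Matrix (Fin N) (Fin N) ℝ)).PosSemidef := by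
    refine .of_dotProduct_mulVec_nonneg ?_ (fun x => ?_)
    · show (S - μ • 1)ᴴ = S - μ • 1
      rw [conjTranspose_sub, conjTranspose_smul, hS.1.eq, conjTranspose_one]
      simp
    · have h1 := hlow (WithLp.toLp 2 x)
      rw [norm_sq_eq_dot] at h1
      simp only [WithLp.ofLp_toLp] at h1
      simp only [star_trivial]
      rw [sub_mulVec, dotProduct_sub, smul_mulVec, one_mulVec, dotProduct_smul,
        smul_eq_mul]
      linarith
  have hPP : ((S - μ • (1 : Matrix (Fin N) (Fin N) ℝ)) *
      (S - μ • (1 : Matrix (Fin N) (Fin N) ℝ))).PosSemidef := by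
    have := Matrix.posSemidef_conjTranspose_mul_self (S - μ • (1 : Matrix (Fin N) (Fin N) ℝ))
    rwa [hP.1.eq] at this
  have hd : (0 : ℝ) < 1 + a * μ := by positivity
  -- key matrix identity
  have key : (1 + b * μ) • (A * A) - (1 + a * μ) • (A * B)
      = ((a - b) * (1 + a * μ)) • (S - μ • (1 : Matrix (Fin N) (Fin N) ℝ))
        + ((a - b) * a) • ((S - μ • (1 : Matrix (Fin N) (Fin N) ℝ))
          * (S - μ • (1 : Matrix (Fin N) (Fin N) ℝ))) := by
    rw [hA_def, hB_def]
    simp only [add_mul, mul_add, one_mul, mul_one, sub_mul, mul_sub, Matrix.smul_mul,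
      Matrix.mul_smul, smul_smul, smul_sub, smul_add, sub_smul, add_smul]
    module
  have hM0 : (((a - b) * (1 + a * μ)) • (S - μ • (1 : Matrix (Fin N) (Fin N) ℝ))
        + ((a - b) * a) • ((S - μ • (1 : Matrix (Fin N) (Fin N) ℝ))
          * (S - μ • (1 : Matrix (Fin N) (Fin N) ℝ)))).PosSemidef :=
    (psd_smul' (mul_nonneg (by linarith) (le_of_lt hd)) hP).add
      (psd_smul' (mul_nonneg (by linarith) ha) hPP)
  -- invert A
  have hdet : IsUnit A.det := isUnit_iff_ne_zero.mpr (ne_of_gt hA.det_pos)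
  set y : Fin N → ℝ := A⁻¹ *ᵥ z with hy_def
  have hz : A *ᵥ y = z := by
    rw [hy_def, mulVec_mulVec, Matrix.mul_nonsing_inv _ hdet, one_mulVec]
  set q1 : ℝ := y ⬝ᵥ ((A * B) *ᵥ y) with hq1_def
  set q2 : ℝ := y ⬝ᵥ ((A * A) *ᵥ y) with hq2_def
  have hLHS : z ⬝ᵥ ((B * A⁻¹) *ᵥ z) = q1 := by
    rw [← mulVec_mulVec z B A⁻¹]
    show z ⬝ᵥ (B *ᵥ y) = q1
    rw [hq1_def, ← hz, dot_symm A hAt, mulVec_mulVec]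
  have hRHS : ‖z‖ ^ 2 = q2 := by
    rw [norm_sq_eq_dot, hq2_def, ← hz, dot_symm A hAt, mulVec_mulVec]
  have hineq : 0 ≤ (1 + b * μ) * q2 - (1 + a * μ) * q1 := by
    have h0 : 0 ≤ y ⬝ᵥ (((1 + b * μ) • (A * A) - (1 + a * μ) • (A * B)) *ᵥ y) := by
      rw [key]
      simpa using hM0.dotProduct_mulVec_nonneg y
    rw [sub_mulVec, smul_mulVec, smul_mulVec, dotProduct_sub, dotProduct_smul,
      dotProduct_smul, smul_eq_mul, smul_eq_mul] at h0
    linarith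
  rw [hLHS, hRHS, div_mul_eq_mul_div, le_div_iff₀ hd]
  linarith
end
end

section
/- Let m, n ∈ ℕ with n ≥ 1, let η ≥ 0, and let z : ℕ → ℝ^{2d} follow WOGDA. Then for every integer j ≥ 1 and every integer t ≥ j(m+1): z_{t+1} − z_t = Σ_{k=1}^{j} (n+m)^{k−1} η^{k} A^{k} z_{t−k(m+1)+1} + (n+m)^{j} η^{j} A^{j} (z_{t−j(m+1)+1} − z_{t−j(m+1)}). -/
open Matrix Finset

noncomputable section

lemma mulVecE_add {d : ℕ} (M : Matrix (Fin d ⊕ Fin d) (Fin d ⊕ Fin d) ℝ) (x y : Vec d) :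
    mulVecE M (x + y) = mulVecE M x + mulVecE M y := by simp [mulVecE, Matrix.mulVec_add]

lemma mulVecE_sub {d : ℕ} (M : Matrix (Fin d ⊕ Fin d) (Fin d ⊕ Fin d) ℝ) (x y : Vec d) :
    mulVecE M (x - y) = mulVecE M x - mulVecE M y := by simp [mulVecE, Matrix.mulVec_sub]

lemma mulVecE_smul {d : ℕ} (M : Matrix (Fin d ⊕ Fin d) (Fin d ⊕ Fin d) ℝ) (c : ℝ) (x : Vec d) :
    mulVecE M (c • x) = c • mulVecE M x := by simp [mulVecE, Matrix.mulVec_smul]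

lemma mulVecE_mul {d : ℕ} (M N : Matrix (Fin d ⊕ Fin d) (Fin d ⊕ Fin d) ℝ) (x : Vec d) :
    mulVecE (M * N) x = mulVecE M (mulVecE N x) := by simp [mulVecE, Matrix.mulVec_mulVec]

/-- The recursive expansion of the WOGDA increment (Eq. (recursive)). -/
theorem wogda_recursive_expansion
    (d : ℕ) (hd : 0 < d) (B : Matrix (Fin d) (Fin d) ℝ) (hB : IsUnit B.det)
    (m n : ℕ) (hn : 1 ≤ n) (η : ℝ) (hη : 0 ≤ η)
    (z : ℕ → Vec d) (hz : FollowsWOGDA (mkA B) m n η z)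
    (j : ℕ) (hj : 1 ≤ j) (t : ℕ) (ht : j * (m + 1) ≤ t) :
    z (t + 1) - z t =
      (∑ k ∈ Finset.Icc 1 j, (((n : ℝ) + m) ^ (k - 1) * η ^ k) •
        mulVecE (mkA B ^ k) (z (t - k * (m + 1) + 1))) +
      (((n : ℝ) + m) ^ j * η ^ j) •
        mulVecE (mkA B ^ j) (z (t - j * (m + 1) + 1) - z (t - j * (m + 1))) := by
  induction j with
  | zero => omega
  | succ j ih =>
    rcases Nat.eq_zero_or_pos j with hj0 | hjpos
    · subst hj0
      have h1 : m + 1 ≤ t := by simpa using ht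
      have e1 : t - 1 * (m + 1) + 1 = t - m := by omega
      have e2 : t - 1 * (m + 1) = t - m - 1 := by omega
      rw [show (0:ℕ)+1 = 1 from rfl, Finset.Icc_self, Finset.sum_singleton, e1, e2,
        pow_one, pow_one, pow_one]
      have := hz t h1
      rw [this]
      simp [mulVecE_sub]
    · -- inductive step
      have hp : (j + 1) * (m + 1) = j * (m + 1) + (m + 1) := by ring
      have ht' : j * (m + 1) ≤ t := by omega
      have IH := ih hjpos ht'
      set s := t - j * (m + 1) with hs
      have hsm : m + 1 ≤ s := by omega
      have hz' := hz s hsm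
      have e1 : s - m = t - (j + 1) * (m + 1) + 1 := by omega
      have e2 : s - m - 1 = t - (j + 1) * (m + 1) := by omega
      rw [Finset.sum_Icc_succ_top (by omega : 1 ≤ j + 1)]
      have hterm :
          (((n : ℝ) + m) ^ j * η ^ j) • mulVecE (mkA B ^ j) (z (s + 1) - z s) =
          (((n : ℝ) + m) ^ (j + 1 - 1) * η ^ (j + 1)) •
              mulVecE (mkA B ^ (j + 1)) (z (t - (j + 1) * (m + 1) + 1)) +
          (((n : ℝ) + m) ^ (j + 1) * η ^ (j + 1)) •
              mulVecE (mkA B ^ (j + 1))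
                (z (t - (j + 1) * (m + 1) + 1) - z (t - (j + 1) * (m + 1))) := by
        rw [hz', ← e1, ← e2]
        rw [mulVecE_add, mulVecE_smul, mulVecE_smul]
        rw [show mkA B ^ (j + 1) = mkA B ^ j * mkA B from pow_succ _ _]
        rw [mulVecE_mul, mulVecE_mul]
        rw [show j + 1 - 1 = j from rfl]
        rw [pow_succ ((n : ℝ) + m) j, pow_succ η j]
        module
      rw [IH, hterm]
      abel
end
end

section
/- Let m ∈ ℕ, let κ ≥ 1 and λ_max > 0 be reals, set λ_min := λ_max/κ and η := 1/(56(m+1)²κ²λ_max). Then 1 − (1/2)η²λ_min² + (1/2)η⁴λ_min⁴ + 2(m+2)(m+1)η³λ_max³ + 8(m+1)³η⁴λ_max⁴ + 2(m+3)(m+1)⁴η⁵λ_max⁵ ≤ 1 − 1/(6·56²·κ⁶·(m+1)⁴). -/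
theorem aux_poly (t k : ℝ) (ht : 1 ≤ t) (hk : 1 ≤ k) :
    9408 * t^4 + 1344 * t^6 * k^2 + 672 * t^7 * k^2 + 150528 * t^7 * k^4 +
      2107392 * t^7 * k^6 ≤ 17561600 * t^8 * k^6 := by
  have h : ∀ i j : ℕ, i ≤ 8 → j ≤ 6 → t^i * k^j ≤ t^8 * k^6 := by
    intro i j hi hj
    exact mul_le_mul (pow_le_pow_right₀ ht hi) (pow_le_pow_right₀ hk hj)
      (by positivity) (by positivity)
  have h1 := h 4 0 (by norm_num) (by norm_num)
  have h2 := h 6 2 (by norm_num) (by norm_num)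
  have h3 := h 7 2 (by norm_num) (by norm_num)
  have h4 := h 7 4 (by norm_num) (by norm_num)
  have h5 := h 7 6 (by norm_num) (by norm_num)
  simp only [pow_zero, mul_one] at h1
  have h0 : (0:ℝ) ≤ t^8*k^6 := by positivity
  linarith [h1, h2, h3, h4, h5, h0]

set_option maxHeartbeats 2000000 in
theorem aux_frac (t k : ℝ) (ht : 1 ≤ t) (hk : 1 ≤ k) :
    1 - 1/2*((1/(56*t^2*k^2))/k)^2 + 1/2*((1/(56*t^2*k^2))/k)^4
        + 2*(t+1)*t*(1/(56*t^2*k^2))^3 + 8*t^3*(1/(56*t^2*k^2))^4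
        + 2*(t+2)*t^4*(1/(56*t^2*k^2))^5 ≤ 1 - 1/(6*56^2*k^6*t^4) := by
  have ht0 : (0:ℝ) < t := by linarith
  have hk0 : (0:ℝ) < k := by linarith
  have key : (1 - 1/(6*56^2*k^6*t^4)) -
      (1 - 1/2*((1/(56*t^2*k^2))/k)^2 + 1/2*((1/(56*t^2*k^2))/k)^4
        + 2*(t+1)*t*(1/(56*t^2*k^2))^3 + 8*t^3*(1/(56*t^2*k^2))^4
        + 2*(t+2)*t^4*(1/(56*t^2*k^2))^5) =
      (17561600 * t^8 * k^6 - (9408 * t^4 + 1344 * t^6 * k^2 + 672 * t^7 * k^2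
        + 150528 * t^7 * k^4 + 2107392 * t^7 * k^6)) / (6*56^6*t^12*k^12) := by
    field_simp
    ring
  have h2 := aux_poly t k ht hk
  have h3 : (0:ℝ) ≤ (17561600 * t^8 * k^6 - (9408 * t^4 + 1344 * t^6 * k^2 + 672 * t^7 * k^2
        + 150528 * t^7 * k^4 + 2107392 * t^7 * k^6)) / (6*56^6*t^12*k^12) :=
    div_nonneg (by linarith) (by positivity)
  linarith [key, h3]

/-- The key scalar computation in the proof of Theorem 1: with the step size
η = 1/(56(m+1)²κ²λ_max), the combined rate LCR_EPP(1) + ER(2,1) is at most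
1 - 1/(6·56²κ⁶(m+1)⁴). -/
theorem next_step_rate_computation
    (m : ℕ) (κ lmax : ℝ) (hκ : 1 ≤ κ) (hlmax : 0 < lmax)
    (lmin : ℝ) (hlmin : lmin = lmax / κ)
    (η : ℝ) (hη : η = 1 / (56 * ((m : ℝ) + 1) ^ 2 * κ ^ 2 * lmax)) :
    1 - 1 / 2 * η ^ 2 * lmin ^ 2 + 1 / 2 * η ^ 4 * lmin ^ 4 +
        2 * ((m : ℝ) + 2) * ((m : ℝ) + 1) * η ^ 3 * lmax ^ 3 +
        8 * ((m : ℝ) + 1) ^ 3 * η ^ 4 * lmax ^ 4 +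
        2 * ((m : ℝ) + 3) * ((m : ℝ) + 1) ^ 4 * η ^ 5 * lmax ^ 5 ≤
      1 - 1 / (6 * 56 ^ 2 * κ ^ 6 * ((m : ℝ) + 1) ^ 4) := by
  have hκ0 : (0:ℝ) < κ := lt_of_lt_of_le one_pos hκ
  set t : ℝ := (m:ℝ) + 1 with ht
  have ht1 : (1:ℝ) ≤ t := by
    have : (0:ℝ) ≤ (m:ℝ) := Nat.cast_nonneg m
    linarith
  have ht0 : (0:ℝ) < t := by linarith
  have e1 : η * lmax = 1/(56*t^2*κ^2) := by
    rw [hη]; field_simp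
  calc 1 - 1 / 2 * η ^ 2 * lmin ^ 2 + 1 / 2 * η ^ 4 * lmin ^ 4 +
        2 * ((m : ℝ) + 2) * ((m : ℝ) + 1) * η ^ 3 * lmax ^ 3 +
        8 * ((m : ℝ) + 1) ^ 3 * η ^ 4 * lmax ^ 4 +
        2 * ((m : ℝ) + 3) * ((m : ℝ) + 1) ^ 4 * η ^ 5 * lmax ^ 5
      = 1 - 1/2*((η*lmax)/κ)^2 + 1/2*((η*lmax)/κ)^4
        + 2*(t+1)*t*(η*lmax)^3 + 8*t^3*(η*lmax)^4
        + 2*(t+2)*t^4*(η*lmax)^5 := by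
        subst hlmin; push_cast [ht]; ring
    _ = 1 - 1/2*((1/(56*t^2*κ^2))/κ)^2 + 1/2*((1/(56*t^2*κ^2))/κ)^4
        + 2*(t+1)*t*(1/(56*t^2*κ^2))^3 + 8*t^3*(1/(56*t^2*κ^2))^4
        + 2*(t+2)*t^4*(1/(56*t^2*κ^2))^5 := by rw [e1]
    _ ≤ 1 - 1/(6*56^2*κ^6*t^4) := aux_frac t κ ht1 hκ
end

section
/- Let m ≥ 1 be an integer, let κ ≥ 1 and λ_max > 0 be reals, set λ_min := λ_max/κ, j := ⌊ln(m+1)⌋ + 2 (ln the natural logarithm), and η := 1/(93·(m+1)^{2j/(2j−1)}·κ²·λ_max). Then 1 − (1/2)(m+1)η²λ_min² + (1/2)(m/2+1)²(m+1)η⁴λ_min⁴ + 4(m+1)²η³λ_max³ + 8(3m/2+1)^{j+1}η^{j+2}λ_max^{j+2} + 2(2m+3)(3m/2+1)^{2j}η^{2j+1}λ_max^{2j+1} ≤ 1 − 1/(6·93²·e·κ⁶·(m+1)). -/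
set_option maxHeartbeats 4000000


/-- The key scalar computation in the proof of Theorem 2: with the step size
η = 1/(93(m+1)^{2j/(2j-1)}κ²λ_max) and j = ⌊ln(m+1)⌋ + 2, the combined rate
LCR_EPP(m/2+1) + ER(j, m/2+1) is at most 1 - 1/(6·93²·e·κ⁶·(m+1)). -/
theorem extra_prediction_rate_computation
    (m : ℕ) (hm : 1 ≤ m) (κ lmax : ℝ) (hκ : 1 ≤ κ) (hlmax : 0 < lmax)
    (lmin : ℝ) (hlmin : lmin = lmax / κ)
    (j : ℕ) (hj : j = ⌊Real.log ((m : ℝ) + 1)⌋₊ + 2)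
    (η : ℝ)
    (hη : η = 1 / (93 * ((m : ℝ) + 1) ^ ((2 * (j : ℝ)) / (2 * (j : ℝ) - 1)) * κ ^ 2 * lmax)) :
    1 - 1 / 2 * ((m : ℝ) + 1) * η ^ 2 * lmin ^ 2 +
        1 / 2 * ((m : ℝ) / 2 + 1) ^ 2 * ((m : ℝ) + 1) * η ^ 4 * lmin ^ 4 +
        4 * ((m : ℝ) + 1) ^ 2 * η ^ 3 * lmax ^ 3 +
        8 * (3 * (m : ℝ) / 2 + 1) ^ (j + 1) * η ^ (j + 2) * lmax ^ (j + 2) +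
        2 * (2 * (m : ℝ) + 3) * (3 * (m : ℝ) / 2 + 1) ^ (2 * j) *
          η ^ (2 * j + 1) * lmax ^ (2 * j + 1) ≤
      1 - 1 / (6 * 93 ^ 2 * Real.exp 1 * κ ^ 6 * ((m : ℝ) + 1)) := by
  have hκ0 : (0:ℝ) < κ := by linarith
  have hm1 : (1:ℝ) ≤ (m:ℝ) := by exact_mod_cast hm
  set M : ℝ := (m:ℝ) + 1 with hMdef
  clear_value M
  have hM0 : (0:ℝ) < M := by rw [hMdef]; linarith
  have hM1 : (1:ℝ) ≤ M := by rw [hMdef]; linarith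
  have hj2 : 2 ≤ j := by omega
  have hjR : (2:ℝ) ≤ (j:ℝ) := by exact_mod_cast hj2
  have hlog : Real.log M < (j:ℝ) - 1 := by
    have h := Nat.lt_floor_add_one (Real.log M)
    have hjc : (j:ℝ) = (⌊Real.log M⌋₊:ℝ) + 2 := by
      rw [hj]; push_cast; ring
    linarith
  set r : ℝ := 2 * (j:ℝ) / (2 * (j:ℝ) - 1) with hrdef
  clear_value r
  have hden0 : (0:ℝ) < 2*(j:ℝ) - 1 := by linarith
  have hr1 : 1 ≤ r := by
    rw [hrdef, le_div_iff₀ hden0]; linarith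
  set A : ℝ := M ^ r with hAdef
  clear_value A
  have hA0 : 0 < A := by rw [hAdef]; positivity
  have hA1 : M ≤ A := by
    rw [hAdef]
    calc M = M ^ (1:ℝ) := (Real.rpow_one M).symm
    _ ≤ M ^ r := Real.rpow_le_rpow_of_exponent_le hM1 hr1
  have hlog0 : 0 ≤ Real.log M := Real.log_nonneg hM1
  have hA2 : A ^ 2 ≤ Real.exp 1 * M ^ 2 := by
    have e1 : A ^ 2 = Real.exp (r * 2 * Real.log M) := by
      rw [hAdef, ← Real.rpow_natCast (M ^ r) 2, ← Real.rpow_mul hM0.le,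
        Real.rpow_def_of_pos hM0]
      norm_num [mul_comm]
    have e2 : Real.exp (2 * Real.log M) = M ^ 2 := by
      rw [two_mul, Real.exp_add, Real.exp_log hM0]; ring
    have hrm : r * 2 * Real.log M ≤ 1 + 2 * Real.log M := by
      have hr2 : r - 1 = 1 / (2*(j:ℝ) - 1) := by
        rw [hrdef]; field_simp; ring
      have h3 : (r - 1) * Real.log M ≤ 1/2 := by
        rw [hr2, div_mul_eq_mul_div, one_mul, div_le_iff₀ hden0]
        nlinarith
      nlinarith
    calc A^2 = Real.exp (r*2*Real.log M) := e1
    _ ≤ Real.exp (1 + 2*Real.log M) := Real.exp_le_exp.mpr hrm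
    _ = Real.exp 1 * M^2 := by rw [Real.exp_add, e2]
  have hA3 : M ^ (2*j+2) ≤ A ^ (2*j+1) := by
    have e1 : A ^ (2*j+1) = M ^ (r * ((2*j+1 : ℕ):ℝ)) := by
      rw [hAdef, ← Real.rpow_natCast (M ^ r) (2*j+1), ← Real.rpow_mul hM0.le]
    have e2 : M ^ (2*j+2) = M ^ (((2*j+2 : ℕ)) : ℝ) := (Real.rpow_natCast M (2*j+2)).symm
    rw [e1, e2]
    apply Real.rpow_le_rpow_of_exponent_le hM1
    push_cast
    rw [hrdef, div_mul_eq_mul_div, le_div_iff₀ hden0]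
    nlinarith
  have hlmax0 : lmax ≠ 0 := ne_of_gt hlmax
  have hyl : η * lmax = 1 / (93 * A * κ^2) := by
    rw [hη]; field_simp
  have hylmin : η * lmin = 1 / (93 * A * κ^3) := by
    rw [hη, hlmin]; field_simp
  have hyl0 : 0 < η * lmax := by rw [hyl]; positivity
  set W : ℝ := 1 / (93^2 * Real.exp 1 * κ^6 * M) with hWdef
  set V : ℝ := 1 / (κ^6 * M) with hVdef
  clear_value W V
  have hW0 : 0 < W := by rw [hWdef]; positivity
  have hV0 : 0 < V := by rw [hVdef]; positivity
  -- T1 lower bound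
  have hT1 : 1/2 * W ≤ 1 / 2 * M * η^2 * lmin^2 := by
    have e1 : 1 / 2 * M * η^2 * lmin^2 = 1/2 * M * (η*lmin)^2 := by
      rw [mul_pow]; ring
    rw [e1, hylmin, hWdef]
    have e2 : 1/2 * M * (1/(93*A*κ^3))^2 = M / (2*93^2*A^2*κ^6) := by
      ring
    have e3 : (1:ℝ)/2 * (1/(93^2*Real.exp 1*κ^6*M)) = 1/(2*93^2*Real.exp 1*κ^6*M) := by
      ring
    rw [e2, e3, div_le_div_iff₀ (by positivity) (by positivity)]
    nlinarith [mul_le_mul_of_nonneg_right hA2 (show (0:ℝ) ≤ 2*93^2*κ^6 by positivity),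
      hM0, pow_pos hκ0 6]
  -- T2
  have hT2 : 1 / 2 * ((m:ℝ)/2+1)^2 * M * η^4 * lmin^4 ≤ 1/149610402 * V := by
    have e1 : 1 / 2 * ((m:ℝ)/2+1)^2 * M * η^4 * lmin^4
        = 1/2 * ((m:ℝ)/2+1)^2 * M * (η*lmin)^4 := by rw [mul_pow]; ring
    rw [e1, hylmin]
    have hP : ((m:ℝ)/2+1) ≤ M := by rw [hMdef]; linarith
    have hP0 : (0:ℝ) ≤ (m:ℝ)/2+1 := by linarith
    calc 1/2 * ((m:ℝ)/2+1)^2 * M * (1/(93*A*κ^3))^4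
        ≤ 1/2 * M^2 * M * (1/(93*M*κ^3))^4 := by
          gcongr
    _ = 1/(2*93^4*κ^12*M) := by field_simp
    _ ≤ 1/149610402 * V := by
        rw [hVdef]
        have e2 : (1:ℝ)/149610402 * (1/(κ^6*M)) = 1/(149610402*(κ^6*M)) := by ring
        rw [e2]
        apply one_div_le_one_div_of_le (by positivity)
        have hk : κ^6 ≤ κ^12 := pow_le_pow_right₀ hκ (by norm_num)
        nlinarith [mul_le_mul_of_nonneg_right hk hM0.le]
  -- T3
  have hT3 : 4 * M^2 * η^3 * lmax^3 ≤ 4/804357 * V := by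
    have e1 : 4 * M^2 * η^3 * lmax^3 = 4 * M^2 * (η*lmax)^3 := by rw [mul_pow]; ring
    rw [e1, hyl]
    calc 4 * M^2 * (1/(93*A*κ^2))^3 ≤ 4 * M^2 * (1/(93*M*κ^2))^3 := by gcongr
    _ = 4/(804357*κ^6*M) := by field_simp; ring
    _ = 4/804357 * V := by rw [hVdef]; ring
  -- T4
  have hB0 : (0:ℝ) ≤ 3*(m:ℝ)/2 + 1 := by linarith
  have hBM : 3*(m:ℝ)/2 + 1 ≤ 3/2 * M := by rw [hMdef]; linarith
  have hBc : (3*(m:ℝ)/2+1) * (η*lmax) ≤ 1/(62*κ^2) := by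
    rw [hyl, mul_one_div, div_le_div_iff₀ (by positivity) (by positivity)]
    nlinarith [mul_le_mul_of_nonneg_right (hBM.trans (by nlinarith : 3/2*M ≤ 3/2*A))
      (show (0:ℝ) ≤ 62*κ^2 by positivity)]
  have hc1 : (1:ℝ)/(62*κ^2) ≤ 1 := by
    rw [div_le_one (by positivity)]; nlinarith
  have hBc0 : (0:ℝ) ≤ (3*(m:ℝ)/2+1) * (η*lmax) := by positivity
  have hylM : η*lmax ≤ 1/(93*M) := by
    rw [hyl]
    apply one_div_le_one_div_of_le (by positivity)
    nlinarith [mul_le_mul_of_nonneg_left (show (1:ℝ) ≤ κ^2 by nlinarith) hA0.le]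
  have hT4 : 8 * (3*(m:ℝ)/2+1)^(j+1) * η^(j+2) * lmax^(j+2) ≤ 8/22164504 * V := by
    have e1 : 8 * (3*(m:ℝ)/2+1)^(j+1) * η^(j+2) * lmax^(j+2)
        = 8 * (((3*(m:ℝ)/2+1)*(η*lmax))^(j+1) * (η*lmax)) := by
      rw [mul_pow, mul_pow]; ring
    rw [e1]
    calc 8 * (((3*(m:ℝ)/2+1)*(η*lmax))^(j+1) * (η*lmax))
        ≤ 8 * ((1/(62*κ^2))^(j+1) * (η*lmax)) := by
          gcongr
    _ ≤ 8 * ((1/(62*κ^2))^3 * (η*lmax)) := by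
          have hp : (1/(62*κ^2))^(j+1) ≤ (1/(62*κ^2))^3 :=
            pow_le_pow_of_le_one (by positivity) hc1 (by omega)
          exact mul_le_mul_of_nonneg_left
            (mul_le_mul_of_nonneg_right hp hyl0.le) (by norm_num)
    _ ≤ 8 * ((1/(62*κ^2))^3 * (1/(93*M))) := by gcongr
    _ = 8/(22164504*(κ^6*M)) := by ring
    _ = 8/22164504 * V := by rw [hVdef]; ring
  -- T5
  have hT5 : 2*(2*(m:ℝ)+3)*(3*(m:ℝ)/2+1)^(2*j)*η^(2*j+1)*lmax^(2*j+1)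
      ≤ 6/1374199248 * V := by
    have e1 : 2*(2*(m:ℝ)+3)*(3*(m:ℝ)/2+1)^(2*j)*η^(2*j+1)*lmax^(2*j+1)
        = 2*(2*(m:ℝ)+3) * ((3*(m:ℝ)/2+1)^(2*j) * (η*lmax)^(2*j+1)) := by
      rw [mul_pow]; ring
    rw [e1]
    have h5a : (η*lmax)^(2*j+1) ≤ 1/(93^(2*j+1)*M^(2*j+2)*κ^6) := by
      rw [hyl, div_pow, one_pow]
      apply one_div_le_one_div_of_le (by positivity)
      calc (93:ℝ)^(2*j+1)*M^(2*j+2)*κ^6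
          ≤ 93^(2*j+1)*A^(2*j+1)*(κ^2)^(2*j+1) := by
            have h1 : (93:ℝ)^(2*j+1)*M^(2*j+2) ≤ 93^(2*j+1)*A^(2*j+1) :=
              mul_le_mul_of_nonneg_left hA3 (by positivity)
            have h2 : κ^6 ≤ (κ^2)^(2*j+1) := by
              calc κ^6 = (κ^2)^3 := by ring
              _ ≤ (κ^2)^(2*j+1) := pow_le_pow_right₀ (by nlinarith) (by omega)
            exact mul_le_mul h1 h2 (by positivity) (by positivity)
      _ = (93*A*κ^2)^(2*j+1) := by rw [mul_pow, mul_pow]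
    have h5b : 2*(2*(m:ℝ)+3) ≤ 6*M := by rw [hMdef]; linarith
    have h5c : (3*(m:ℝ)/2+1)^(2*j) ≤ (3/2*M)^(2*j) := pow_le_pow_left₀ hB0 hBM _
    calc 2*(2*(m:ℝ)+3) * ((3*(m:ℝ)/2+1)^(2*j) * (η*lmax)^(2*j+1))
        ≤ 6*M * ((3/2*M)^(2*j) * (1/(93^(2*j+1)*M^(2*j+2)*κ^6))) := by
          apply mul_le_mul h5b (mul_le_mul h5c h5a (by positivity) (by positivity))
            (by positivity) (by positivity)
    _ = (6*(3/2)^(2*j)*M^(2*j+1)) / (93^(2*j+1)*M^(2*j+2)*κ^6) := by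
          rw [mul_pow]; ring
    _ ≤ 6/(1374199248*(κ^6*M)) := by
          rw [div_le_div_iff₀ (by positivity) (by positivity)]
          have h93 : ((93:ℝ))^(2*j) = (3/2)^(2*j) * 62^(2*j) := by
            rw [← mul_pow]; norm_num
          rw [pow_succ (93:ℝ) (2*j), h93, pow_add M (2*j) 2, pow_succ M (2*j)]
          have h62 : (62:ℝ)^4 ≤ 62^(2*j) := pow_le_pow_right₀ (by norm_num) (by omega)
          nlinarith [mul_le_mul_of_nonneg_right h62
            (show (0:ℝ) ≤ 6*93*(3/2)^(2*j)*M^(2*j)*M^2*κ^6 by positivity)]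
    _ = 6/1374199248 * V := by rw [hVdef]; ring
  -- combine
  have hVW : V ≤ 23526 * W := by
    rw [hVdef, hWdef, mul_one_div, div_le_div_iff₀ (by positivity) (by positivity)]
    have hE : Real.exp 1 ≤ 2.72 := le_of_lt (lt_trans Real.exp_one_lt_d9 (by norm_num))
    nlinarith [mul_le_mul_of_nonneg_right hE (show (0:ℝ) ≤ κ^6*M by positivity),
      mul_pos (pow_pos hκ0 6) hM0]
  have hD : 1/(6*93^2*Real.exp 1*κ^6*M) = 1/6 * W := by rw [hWdef]; ring
  rw [show (1:ℝ) - 1 / (6 * 93 ^ 2 * Real.exp 1 * κ ^ 6 * M)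
      = 1 - 1/6 * W by rw [← hD]]
  linarith [hT1, hT2, hT3, hT4, hT5, hVW, hW0.le, hV0.le]
end

section
/- Let m, n ∈ ℕ with n ≥ 1, let η ≥ 0, and let z : ℕ → ℝ^{2d} follow WOGDA. For every integer t ≥ m+1, letting z†_{t+1} denote the EPP update of z_t, it holds that z†_{t+1} − z_{t+1} = (I − nηA)⁻¹ · ηA · Δ²𝒵_t. -/
open Matrix Finset

noncomputable section

namespace WogdaAux

variable {d : ℕ}

lemma mulVecE_add (M : Matrix (Fin d ⊕ Fin d) (Fin d ⊕ Fin d) ℝ) (x y : Vec d) :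
    mulVecE M (x + y) = mulVecE M x + mulVecE M y := by simp [mulVecE, Matrix.mulVec_add]

lemma mulVecE_sub (M : Matrix (Fin d ⊕ Fin d) (Fin d ⊕ Fin d) ℝ) (x y : Vec d) :
    mulVecE M (x - y) = mulVecE M x - mulVecE M y := by simp [mulVecE, Matrix.mulVec_sub]

lemma mulVecE_smul (M : Matrix (Fin d ⊕ Fin d) (Fin d ⊕ Fin d) ℝ) (c : ℝ) (x : Vec d) :
    mulVecE M (c • x) = c • mulVecE M x := by simp [mulVecE, Matrix.mulVec_smul]

lemma mulVecE_matSmul (M : Matrix (Fin d ⊕ Fin d) (Fin d ⊕ Fin d) ℝ) (c : ℝ) (x : Vec d) :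
    mulVecE (c • M) x = c • mulVecE M x := by simp [mulVecE, Matrix.smul_mulVec]

lemma mulVecE_one (x : Vec d) : mulVecE (1 : Matrix (Fin d ⊕ Fin d) (Fin d ⊕ Fin d) ℝ) x = x :=
  by simp [mulVecE]

lemma mulVecE_matSub (M N : Matrix (Fin d ⊕ Fin d) (Fin d ⊕ Fin d) ℝ) (x : Vec d) :
    mulVecE (M - N) x = mulVecE M x - mulVecE N x := by simp [mulVecE, Matrix.sub_mulVec]

lemma mulVecE_mul (M N : Matrix (Fin d ⊕ Fin d) (Fin d ⊕ Fin d) ℝ) (x : Vec d) :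
    mulVecE (M * N) x = mulVecE M (mulVecE N x) := by simp [mulVecE, Matrix.mulVec_mulVec]

lemma mkA_skew (B : Matrix (Fin d) (Fin d) ℝ) : (mkA B)ᵀ = -(mkA B) := by
  simp [mkA, Matrix.fromBlocks_transpose, Matrix.fromBlocks_neg]

lemma isUnit_one_sub_smul_mkA (c : ℝ) (B : Matrix (Fin d) (Fin d) ℝ) :
    IsUnit ((1 : Matrix (Fin d ⊕ Fin d) (Fin d ⊕ Fin d) ℝ) - c • mkA B) := by
  rw [← Matrix.mulVec_injective_iff_isUnit]
  have key : ∀ v : (Fin d ⊕ Fin d) → ℝ,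
      ((1 : Matrix (Fin d ⊕ Fin d) (Fin d ⊕ Fin d) ℝ) - c • mkA B).mulVec v = 0 → v = 0 := by
    intro v hv
    have h1 : v = c • (mkA B).mulVec v := by
      rwa [Matrix.sub_mulVec, Matrix.one_mulVec, Matrix.smul_mulVec, sub_eq_zero] at hv
    have hskew : v ⬝ᵥ (mkA B).mulVec v = 0 := by
      have h2 : v ⬝ᵥ (mkA B).mulVec v = -(v ⬝ᵥ (mkA B).mulVec v) := by
        nth_rewrite 1 [Matrix.dotProduct_mulVec, ← Matrix.mulVec_transpose, mkA_skew,
          Matrix.neg_mulVec, neg_dotProduct, dotProduct_comm]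
        rfl
      linarith
    have h3 : v ⬝ᵥ v = 0 := by
      nth_rewrite 2 [h1]
      rw [dotProduct_smul, hskew, smul_zero]
    exact dotProduct_self_eq_zero.mp h3
  intro x y hxy
  exact sub_eq_zero.mp (key (x - y) (by rw [Matrix.mulVec_sub, hxy, sub_self]))

lemma Zcal_succ (m : ℕ) (n : ℝ) (z : ℕ → Vec d) (t : ℕ) :
    Zcal (m + 1) n z t = Zcal m n z t + (n + (m : ℝ) + 1) • z (t - (m + 2)) := by
  unfold Zcal
  rw [Finset.sum_Icc_succ_top (by omega : 1 ≤ m + 1 + 1),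
      Finset.sum_Icc_succ_top (by omega : 2 ≤ m + 1 + 1)]
  have hinner : ∑ s ∈ Finset.Icc 2 (m + 1), ∑ r ∈ Finset.Icc s (m + 1 + 1), z (t - r)
      = ∑ s ∈ Finset.Icc 2 (m + 1),
          ((∑ r ∈ Finset.Icc s (m + 1), z (t - r)) + z (t - (m + 1 + 1))) := by
    refine Finset.sum_congr rfl fun s hs => ?_
    have : s ≤ m + 1 + 1 := by
      have := (Finset.mem_Icc.mp hs).2; omega
    rw [Finset.sum_Icc_succ_top this]
  rw [hinner, Finset.sum_add_distrib, Finset.sum_const, Nat.card_Icc]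
  have hm : (m + 1 + 1 - 2) • z (t - (m + 1 + 1)) = (m : ℝ) • z (t - (m + 2)) := by
    rw [show m + 1 + 1 - 2 = m from by omega, ← Nat.cast_smul_eq_nsmul ℝ]
  rw [hm, show t - (m + 1 + 1) = t - (m + 2) from rfl, Finset.Icc_self, Finset.sum_singleton]
  module

lemma delta2 (n : ℝ) (z : ℕ → Vec d) :
    ∀ m t : ℕ, m + 1 ≤ t →
      Delta2Zcal m n z t =
        n • (z (t + 1) - z t) + (z t - z (t - m)) -
          (n + (m : ℝ)) • (z (t - m) - z (t - m - 1)) := by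
  intro m
  induction m with
  | zero =>
    intro t ht
    unfold Delta2Zcal Zcal
    rw [show Finset.Icc 2 (0 + 1) = ∅ from rfl]
    simp only [Finset.Icc_self, Finset.sum_singleton, Finset.sum_empty, add_zero,
      Nat.cast_zero]
    rw [show t + 2 - 1 = t + 1 from by omega, show t + 1 - 1 = t from by omega]
    norm_num
    module
  | succ m ih =>
    intro t ht
    have h1 : m + 1 ≤ t := by omega
    have e2 : Delta2Zcal (m + 1) n z t = Delta2Zcal m n z t +
        (n + (m : ℝ) + 1) •
          (z (t + 2 - (m + 2)) - (2 : ℝ) • z (t + 1 - (m + 2)) + z (t - (m + 2))) := by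
      unfold Delta2Zcal
      rw [Zcal_succ, Zcal_succ, Zcal_succ]
      module
    rw [e2, ih t h1,
        show t + 2 - (m + 2) = t - m from by omega,
        show t + 1 - (m + 2) = t - m - 1 from by omega,
        show t - (m + 2) = t - m - 1 - 1 from by omega]
    push_cast
    rw [show t - (m + 1) = t - m - 1 from by omega,
        show t - m - 1 - 1 = t - (m + 1) - 1 from by omega,
        show t - (m + 1) = t - m - 1 from by omega]
    module

end WogdaAux

/-- The closed-form error identity, key step in the proof of Lemma 3. -/
theorem wogda_epp_error_identity
    (d : ℕ) (hd : 0 < d) (B : Matrix (Fin d) (Fin d) ℝ) (hB : IsUnit B.det)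
    (m n : ℕ) (hn : 1 ≤ n) (η : ℝ) (hη : 0 ≤ η)
    (z : ℕ → Vec d) (hz : FollowsWOGDA (mkA B) m n η z)
    (t : ℕ) (ht : m + 1 ≤ t)
    (zdag : Vec d) (hzdag : IsEPP (mkA B) (n : ℝ) η (z t) zdag) :
    zdag - z (t + 1) =
      mulVecE (((1 : Matrix (Fin d ⊕ Fin d) (Fin d ⊕ Fin d) ℝ) -
          ((n : ℝ) * η) • mkA B)⁻¹ * (η • mkA B))
        (Delta2Zcal m (n : ℝ) z t) := by
  classical
  set A := mkA B with hA
  set c : ℝ := (n : ℝ) * η with hc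
  set M : Matrix (Fin d ⊕ Fin d) (Fin d ⊕ Fin d) ℝ := 1 - c • A with hM
  have hMu : IsUnit M := WogdaAux.isUnit_one_sub_smul_mkA c B
  have hMdet : IsUnit M.det := (Matrix.isUnit_iff_isUnit_det M).mp hMu
  -- the key identity: M (zdag - z (t+1)) = ηA Δ²𝒵
  have key : mulVecE M (zdag - z (t + 1)) = mulVecE (η • A) (Delta2Zcal m (n : ℝ) z t) := by
    have ht1 : z (t + 1) = z t + (η • mulVecE A (z (t - m)) +
        (((n : ℝ) + (m : ℝ)) * η) •
          (mulVecE A (z (t - m)) - mulVecE A (z (t - m - 1)))) := by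
      have hw := hz t ht
      rw [WogdaAux.mulVecE_sub] at hw
      rw [← hw]
      abel
    have hzd : zdag = z t + η • mulVecE A (z t) +
        c • (mulVecE A zdag - mulVecE A (z t)) := by
      have h := hzdag
      unfold IsEPP at h
      rw [WogdaAux.mulVecE_sub] at h
      exact h
    rw [WogdaAux.delta2 (n : ℝ) z m t ht, hM]
    simp only [WogdaAux.mulVecE_matSub, WogdaAux.mulVecE_one, WogdaAux.mulVecE_matSmul,
      WogdaAux.mulVecE_sub, WogdaAux.mulVecE_add, WogdaAux.mulVecE_smul]
    rw [ht1]
    simp only [WogdaAux.mulVecE_add, WogdaAux.mulVecE_smul, WogdaAux.mulVecE_sub]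
    set w := mulVecE A zdag with hwdef
    rw [hzd]
    rw [hc]
    push_cast
    module
  -- conclude using invertibility of M
  calc zdag - z (t + 1)
      = mulVecE (1 : Matrix (Fin d ⊕ Fin d) (Fin d ⊕ Fin d) ℝ) (zdag - z (t + 1)) :=
        (WogdaAux.mulVecE_one _).symm
    _ = mulVecE (M⁻¹ * M) (zdag - z (t + 1)) := by rw [Matrix.nonsing_inv_mul M hMdet]
    _ = mulVecE M⁻¹ (mulVecE M (zdag - z (t + 1))) := WogdaAux.mulVecE_mul _ _ _
    _ = mulVecE M⁻¹ (mulVecE (η • A) (Delta2Zcal m (n : ℝ) z t)) := by rw [key]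
    _ = mulVecE (M⁻¹ * (η • A)) (Delta2Zcal m (n : ℝ) z t) := (WogdaAux.mulVecE_mul _ _ _).symm
end
end
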